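/- arXiv:2108.09494 — 3 statements merged into one kernel-verified Lean document; each statement's English description precedes it below -/
import Mathlib

section
/- Let Q = ⟨x₁², x₂², x₁ − x₂x₃⟩ and P = ⟨x₁, x₂⟩ in ℂ[x₁,x₂,x₃]. If a polynomial f lies in Q, then both f and (x₃·∂f/∂x₁ + ∂f/∂x₂) lie in P. Conversely, if both f and x₃·∂f/∂x₁ + ∂f/∂x₂ lie in P, then f lies in Q. -/
open MvPolynomial

noncomputable abbrev psiA : MvPolynomial (Fin 3) ℂ →ₐ[ℂ] MvPolynomial (Fin 3) ℂ :=
  aeval ![X 1 * X 2, X 1, X 2]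

noncomputable abbrev etaA : MvPolynomial (Fin 3) ℂ →ₐ[ℂ] MvPolynomial (Fin 3) ℂ :=
  aeval ![X 0, 0, X 2]

lemma ker_lemma (f : MvPolynomial (Fin 3) ℂ)
    (hf : f ∈ Ideal.span {(X 0 : MvPolynomial (Fin 3) ℂ), X 1}) : etaA (psiA f) = 0 := by
  have h : Ideal.span {(X 0 : MvPolynomial (Fin 3) ℂ), X 1}
      ≤ RingHom.ker (etaA.comp psiA).toRingHom := by
    rw [Ideal.span_le]
    rintro g hg
    simp only [Set.mem_insert_iff, Set.mem_singleton_iff] at hg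
    rcases hg with rfl | rfl <;>
      simp [RingHom.mem_ker]
  simpa [RingHom.mem_ker] using h hf

lemma chain_rule (f : MvPolynomial (Fin 3) ℂ) :
    pderiv 1 (psiA f) = psiA (X 2 * pderiv 0 f + pderiv 1 f) := by
  induction f using MvPolynomial.induction_on with
  | C a => simp
  | add p q hp hq =>
      rw [map_add, map_add, hp, hq, ← map_add]
      congr 1
      rw [map_add, map_add]
      ring
  | mul_X p n hp =>
      fin_cases n <;>
        simp only [map_mul, map_add, pderiv_mul, aeval_X, hp] <;>
        simp <;> ring

lemma sub_eta (g : MvPolynomial (Fin 3) ℂ) : (X 1 : MvPolynomial (Fin 3) ℂ) ∣ g - etaA g := by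
  induction g using MvPolynomial.induction_on with
  | C a => simp
  | add p q hp hq =>
      have : p + q - etaA (p + q) = (p - etaA p) + (q - etaA q) := by rw [map_add]; ring
      rw [this]; exact dvd_add hp hq
  | mul_X p n hp =>
      fin_cases n
      · show (X 1 : MvPolynomial (Fin 3) ℂ) ∣ p * X 0 - etaA (p * X 0)
        have : p * X 0 - etaA (p * X 0) = (p - etaA p) * X 0 := by
          rw [map_mul]; simp; ring
        rw [this]; exact hp.mul_right _
      · show (X 1 : MvPolynomial (Fin 3) ℂ) ∣ p * X 1 - etaA (p * X 1)
        have : p * X 1 - etaA (p * X 1) = p * X 1 := by rw [map_mul]; simp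
        rw [this]; exact dvd_mul_left _ p
      · show (X 1 : MvPolynomial (Fin 3) ℂ) ∣ p * X 2 - etaA (p * X 2)
        have : p * X 2 - etaA (p * X 2) = (p - etaA p) * X 2 := by
          rw [map_mul]; simp; ring
        rw [this]; exact hp.mul_right _

lemma taylor (g : MvPolynomial (Fin 3) ℂ) :
    (X 1 : MvPolynomial (Fin 3) ℂ) ^ 2 ∣ g - etaA g - X 1 * etaA (pderiv 1 g) := by
  induction g using MvPolynomial.induction_on with
  | C a => simp
  | add p q hp hq =>
      have : p + q - etaA (p + q) - X 1 * etaA (pderiv 1 (p + q))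
          = (p - etaA p - X 1 * etaA (pderiv 1 p))
            + (q - etaA q - X 1 * etaA (pderiv 1 q)) := by
        rw [map_add, map_add, map_add]; ring
      rw [this]; exact dvd_add hp hq
  | mul_X p n hp =>
      fin_cases n
      · show (X 1 : MvPolynomial (Fin 3) ℂ)^2 ∣ p * X 0 - etaA (p * X 0) - X 1 * etaA (pderiv 1 (p * X 0))
        have : p * X 0 - etaA (p * X 0) - X 1 * etaA (pderiv 1 (p * X 0))
            = (p - etaA p - X 1 * etaA (pderiv 1 p)) * X 0 := by
          rw [map_mul, pderiv_mul]; simp; ring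
        rw [this]; exact hp.mul_right _
      · show (X 1 : MvPolynomial (Fin 3) ℂ)^2 ∣ p * X 1 - etaA (p * X 1) - X 1 * etaA (pderiv 1 (p * X 1))
        have : p * X 1 - etaA (p * X 1) - X 1 * etaA (pderiv 1 (p * X 1))
            = X 1 * (p - etaA p) := by
          rw [map_mul, pderiv_mul]; simp; ring
        rw [this]
        obtain ⟨c, hc⟩ := sub_eta p
        rw [hc]; exact ⟨c, by ring⟩
      · show (X 1 : MvPolynomial (Fin 3) ℂ)^2 ∣ p * X 2 - etaA (p * X 2) - X 1 * etaA (pderiv 1 (p * X 2))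
        have : p * X 2 - etaA (p * X 2) - X 1 * etaA (pderiv 1 (p * X 2))
            = (p - etaA p - X 1 * etaA (pderiv 1 p)) * X 2 := by
          rw [map_mul, pderiv_mul]; simp; ring
        rw [this]; exact hp.mul_right _

lemma sub_psi (g : MvPolynomial (Fin 3) ℂ) :
    g - psiA g ∈ Ideal.span {(X 0 : MvPolynomial (Fin 3) ℂ)^2, X 1^2, X 0 - X 1 * X 2} := by
  set Q := Ideal.span {(X 0 : MvPolynomial (Fin 3) ℂ)^2, X 1^2, X 0 - X 1 * X 2} with hQ
  have hgen : (X 0 : MvPolynomial (Fin 3) ℂ) - X 1 * X 2 ∈ Q :=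
    Ideal.subset_span (by simp)
  induction g using MvPolynomial.induction_on with
  | C a => simp
  | add p q hp hq =>
      have : p + q - psiA (p + q) = (p - psiA p) + (q - psiA q) := by rw [map_add]; ring
      rw [this]; exact add_mem hp hq
  | mul_X p n hp =>
      fin_cases n
      · show p * X 0 - psiA (p * X 0) ∈ Q
        have : p * X 0 - psiA (p * X 0)
            = (p - psiA p) * X 0 + psiA p * (X 0 - X 1 * X 2) := by
          rw [map_mul]; simp; ring
        rw [this]
        exact add_mem (Ideal.mul_mem_right _ _ hp) (Ideal.mul_mem_left _ _ hgen)
      · show p * X 1 - psiA (p * X 1) ∈ Q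
        have : p * X 1 - psiA (p * X 1) = (p - psiA p) * X 1 := by
          rw [map_mul]; simp; ring
        rw [this]; exact Ideal.mul_mem_right _ _ hp
      · show p * X 2 - psiA (p * X 2) ∈ Q
        have : p * X 2 - psiA (p * X 2) = (p - psiA p) * X 2 := by
          rw [map_mul]; simp; ring
        rw [this]; exact Ideal.mul_mem_right _ _ hp

/-- Noetherian operators `1` and `x₃∂₁ + ∂₂` characterize membership in the
primary ideal `Q = ⟨x₁², x₂², x₁ − x₂x₃⟩` with associated prime `P = ⟨x₁,x₂⟩`:
`f ∈ Q` iff both `f` and `x₃·∂f/∂x₁ + ∂f/∂x₂` lie in `P`. -/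
theorem stmt6 (f : MvPolynomial (Fin 3) ℂ) :
    f ∈ Ideal.span {(X 0 : MvPolynomial (Fin 3) ℂ)^2, X 1^2, X 0 - X 1 * X 2}
      ↔ (f ∈ Ideal.span {(X 0 : MvPolynomial (Fin 3) ℂ), X 1} ∧
          X 2 * pderiv 0 f + pderiv 1 f
            ∈ Ideal.span {(X 0 : MvPolynomial (Fin 3) ℂ), X 1}) := by
  set P := Ideal.span {(X 0 : MvPolynomial (Fin 3) ℂ), X 1} with hP
  have hX0 : (X 0 : MvPolynomial (Fin 3) ℂ) ∈ P := Ideal.subset_span (by simp)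
  have hX1 : (X 1 : MvPolynomial (Fin 3) ℂ) ∈ P := Ideal.subset_span (by simp)
  constructor
  · intro hf
    refine Submodule.span_induction ?_ ?_ ?_ ?_ hf
    · rintro g hg
      simp only [Set.mem_insert_iff, Set.mem_singleton_iff] at hg
      rcases hg with rfl | rfl | rfl
      · refine ⟨by rw [sq]; exact Ideal.mul_mem_left _ _ hX0, ?_⟩
        have e : X 2 * pderiv 0 ((X 0 : MvPolynomial (Fin 3) ℂ)^2) + pderiv 1 (X 0^2)
            = X 2 * (X 0 + X 0) := by
          rw [sq, pderiv_mul, pderiv_mul]; simp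
        rw [e]; exact Ideal.mul_mem_left _ _ (add_mem hX0 hX0)
      · refine ⟨by rw [sq]; exact Ideal.mul_mem_left _ _ hX1, ?_⟩
        have e : X 2 * pderiv 0 ((X 1 : MvPolynomial (Fin 3) ℂ)^2) + pderiv 1 (X 1^2)
            = X 1 + X 1 := by
          rw [sq, pderiv_mul, pderiv_mul]; simp
        rw [e]; exact add_mem hX1 hX1
      · refine ⟨sub_mem hX0 (Ideal.mul_mem_right _ _ hX1), ?_⟩
        have e : X 2 * pderiv 0 ((X 0 : MvPolynomial (Fin 3) ℂ) - X 1 * X 2)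
            + pderiv 1 (X 0 - X 1 * X 2) = 0 := by
          rw [map_sub, map_sub, pderiv_mul, pderiv_mul]; simp
        rw [e]; exact zero_mem _
    · exact ⟨zero_mem _, by simp⟩
    · rintro x y - - ⟨hx1, hx2⟩ ⟨hy1, hy2⟩
      refine ⟨add_mem hx1 hy1, ?_⟩
      have : X 2 * pderiv 0 (x + y) + pderiv 1 (x + y)
          = (X 2 * pderiv 0 x + pderiv 1 x) + (X 2 * pderiv 0 y + pderiv 1 y) := by
        rw [map_add, map_add]; ring
      rw [this]; exact add_mem hx2 hy2
    · rintro r x - ⟨hx1, hx2⟩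
      rw [smul_eq_mul]
      refine ⟨Ideal.mul_mem_left _ _ hx1, ?_⟩
      have : X 2 * pderiv 0 (r * x) + pderiv 1 (r * x)
          = r * (X 2 * pderiv 0 x + pderiv 1 x) + (X 2 * pderiv 0 r + pderiv 1 r) * x := by
        rw [pderiv_mul, pderiv_mul]; ring
      rw [this]
      exact add_mem (Ideal.mul_mem_left _ _ hx2) (Ideal.mul_mem_left _ _ hx1)
  · rintro ⟨h1, h2⟩
    have hc1 : etaA (psiA f) = 0 := ker_lemma f h1
    have hc2 : etaA (psiA (X 2 * pderiv 0 f + pderiv 1 f)) = 0 := ker_lemma _ h2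
    have hd : (X 1 : MvPolynomial (Fin 3) ℂ) ^ 2 ∣ psiA f := by
      have h := taylor (psiA f)
      rw [chain_rule f, hc1, hc2] at h
      simpa using h
    have hQg : (X 1 : MvPolynomial (Fin 3) ℂ)^2
        ∈ Ideal.span {(X 0 : MvPolynomial (Fin 3) ℂ)^2, X 1^2, X 0 - X 1 * X 2} :=
      Ideal.subset_span (by simp)
    obtain ⟨c, hc⟩ := hd
    have hf2 : psiA f ∈ Ideal.span {(X 0 : MvPolynomial (Fin 3) ℂ)^2, X 1^2, X 0 - X 1 * X 2} := by
      rw [hc]; exact Ideal.mul_mem_right _ _ hQg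
    have heq : f = (f - psiA f) + psiA f := by ring
    rw [heq]
    exact add_mem (sub_psi f) hf2
end

section
/- Let u₀,u₁,u₂ be positive reals, set D = 2u₀+2u₁+u₂, and define p̂₀ = (2u₀+u₁)²/D², p̂₁ = (2u₀+u₁)(u₁+u₂)/D², p̂₂ = (u₁+u₂)/D. Then p̂₀+p̂₁+p̂₂ = 1, all p̂ᵢ > 0, and p̂₀p̂₂ − (p̂₀+p̂₁)p̂₁ = 0. Moreover, setting s = (2u₀+u₁)/D, one has (p̂₀,p̂₁,p̂₂) = (s², s(1−s), 1−s). -/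
/-- The MLE for the coin-toss model: the estimate lies on the conic
`p₀p₂ = (p₀+p₁)p₁` in the probability simplex `Δ₂`, and comes from the
parametrization `s ↦ (s², s(1−s), 1−s)` at `s = (2u₀+u₁)/D`. -/
theorem stmt10 (u0 u1 u2 D : ℝ)
    (h0 : 0 < u0) (h1 : 0 < u1) (h2 : 0 < u2)
    (hD : D = 2*u0 + 2*u1 + u2)
    (p0 p1 p2 s : ℝ)
    (hp0 : p0 = (2*u0 + u1)^2 / D^2)
    (hp1 : p1 = (2*u0 + u1) * (u1 + u2) / D^2)
    (hp2 : p2 = (u1 + u2) / D)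
    (hs : s = (2*u0 + u1) / D) :
    p0 + p1 + p2 = 1 ∧
      (0 < p0 ∧ 0 < p1 ∧ 0 < p2) ∧
      p0 * p2 - (p0 + p1) * p1 = 0 ∧
      (p0 = s^2 ∧ p1 = s * (1 - s) ∧ p2 = 1 - s) := by
  have hDpos : 0 < D := by nlinarith
  have hDne : D ≠ 0 := ne_of_gt hDpos
  subst hp0 hp1 hp2 hs hD
  refine ⟨by field_simp; try ring, ⟨by positivity, by positivity, by positivity⟩,
    by field_simp; try ring, by field_simp; try ring, by field_simp; try ring, by field_simp; try ring⟩
end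

section
/- For the Trott curve f = 144(x₁⁴+x₂⁴) − 225(x₁²+x₂²) + 350x₁²x₂² + 81 and data point u = (0,0), the system f(x₁,x₂) = 0, x₁·∂f/∂x₂ − x₂·∂f/∂x₁ = 0 has exactly 8 real solutions. -/
open MvPolynomial

/-- The Trott curve `f = 144(x₁⁴+x₂⁴) − 225(x₁²+x₂²) + 350x₁²x₂² + 81`. -/
noncomputable def trott : MvPolynomial (Fin 2) ℝ :=
  144 * (X 0^4 + X 1^4) - 225 * (X 0^2 + X 1^2) + 350 * X 0^2 * X 1^2 + 81

/-- The ED critical equation for the Trott curve with data point `u = (0,0)`. -/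
noncomputable def trottCrit : MvPolynomial (Fin 2) ℝ :=
  X 0 * pderiv 1 trott - X 1 * pderiv 0 trott

lemma pd144 (i : Fin 2) : pderiv i (144 : MvPolynomial (Fin 2) ℝ) = 0 := by
  rw [← map_ofNat (C : ℝ →+* MvPolynomial (Fin 2) ℝ) 144, pderiv_C]
lemma pd225 (i : Fin 2) : pderiv i (225 : MvPolynomial (Fin 2) ℝ) = 0 := by
  rw [← map_ofNat (C : ℝ →+* MvPolynomial (Fin 2) ℝ) 225, pderiv_C]
lemma pd350 (i : Fin 2) : pderiv i (350 : MvPolynomial (Fin 2) ℝ) = 0 := by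
  rw [← map_ofNat (C : ℝ →+* MvPolynomial (Fin 2) ℝ) 350, pderiv_C]
lemma pd81 (i : Fin 2) : pderiv i (81 : MvPolynomial (Fin 2) ℝ) = 0 := by
  rw [← map_ofNat (C : ℝ →+* MvPolynomial (Fin 2) ℝ) 81, pderiv_C]

lemma evCrit (x y : ℝ) : eval ![x,y] trottCrit = 124*x*y*(x^2-y^2) := by
  simp [trottCrit, trott, pd144, pd225, pd350, pd81]; ring
lemma evTrott (x y : ℝ) :
    eval ![x,y] trott = 144*(x^4+y^4) - 225*(x^2+y^2) + 350*x^2*y^2 + 81 := by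
  simp [trott]

lemma solset : {p : ℝ × ℝ | MvPolynomial.eval ![p.1, p.2] trott = 0 ∧
        MvPolynomial.eval ![p.1, p.2] trottCrit = 0} =
    {((0:ℝ),(1:ℝ)), (0,-1), (0,3/4), (0,-3/4), (1,0), (-1,0), (3/4,0), (-3/4,0)} := by
  ext ⟨x, y⟩
  simp only [Set.mem_setOf_eq, evCrit, evTrott, Set.mem_insert_iff, Set.mem_singleton_iff,
    Prod.mk.injEq]
  constructor
  · rintro ⟨h1, h2⟩
    have h2' : x = 0 ∨ y = 0 ∨ (x - y) * (x + y) = 0 := by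
      have := mul_eq_zero.mp h2
      rcases mul_eq_zero.mp h2 with h | h
      · rcases mul_eq_zero.mp h with h | h
        · left; linarith
        · right; left; exact h
      · right; right; linear_combination h
    rcases h2' with hx | hy | hxy
    · subst hx
      have : (y - 1) * (y + 1) * ((12*y - 9) * (12*y + 9)) = 0 := by linear_combination h1
      rcases mul_eq_zero.mp this with h | h
      · rcases mul_eq_zero.mp h with h | h
        · exact Or.inl ⟨rfl, by linarith⟩
        · exact Or.inr (Or.inl ⟨rfl, by linarith⟩)
      · rcases mul_eq_zero.mp h with h | h
        · exact Or.inr (Or.inr (Or.inl ⟨rfl, by linarith⟩))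
        · exact Or.inr (Or.inr (Or.inr (Or.inl ⟨rfl, by linarith⟩)))
    · subst hy
      have : (x - 1) * (x + 1) * ((12*x - 9) * (12*x + 9)) = 0 := by linear_combination h1
      rcases mul_eq_zero.mp this with h | h
      · rcases mul_eq_zero.mp h with h | h
        · exact Or.inr (Or.inr (Or.inr (Or.inr (Or.inl ⟨by linarith, rfl⟩))))
        · exact Or.inr (Or.inr (Or.inr (Or.inr (Or.inr (Or.inl ⟨by linarith, rfl⟩)))))
      · rcases mul_eq_zero.mp h with h | h
        · exact Or.inr (Or.inr (Or.inr (Or.inr (Or.inr (Or.inr (Or.inl ⟨by linarith, rfl⟩))))))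
        · exact Or.inr (Or.inr (Or.inr (Or.inr (Or.inr (Or.inr (Or.inr ⟨by linarith, rfl⟩))))))
    · exfalso
      have hy2 : y^2 = x^2 := by nlinarith [sq_nonneg (x - y), sq_nonneg (x + y)]
      nlinarith [sq_nonneg (638*x^2 - 225), hy2, h1]
  · rintro (⟨hx, hy⟩ | ⟨hx, hy⟩ | ⟨hx, hy⟩ | ⟨hx, hy⟩ | ⟨hx, hy⟩ | ⟨hx, hy⟩ | ⟨hx, hy⟩ | ⟨hx, hy⟩) <;>
      subst hx <;> subst hy <;> norm_num

/-- For the Trott curve and data point `u = (0,0)`, the ED critical system has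
exactly `8` real solutions. -/
theorem stmt15 :
    ({p : ℝ × ℝ | MvPolynomial.eval ![p.1, p.2] trott = 0 ∧
        MvPolynomial.eval ![p.1, p.2] trottCrit = 0}).Finite ∧
      ({p : ℝ × ℝ | MvPolynomial.eval ![p.1, p.2] trott = 0 ∧
        MvPolynomial.eval ![p.1, p.2] trottCrit = 0}).ncard = 8 := by
  rw [solset]
  constructor
  · exact Set.toFinite _
  · rw [show ({((0:ℝ),(1:ℝ)), (0,-1), (0,3/4), (0,-3/4), (1,0), (-1,0), (3/4,0), (-3/4,0)} :
        Set (ℝ × ℝ)) =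
      (↑({((0:ℝ),(1:ℝ)), (0,-1), (0,3/4), (0,-3/4), (1,0), (-1,0), (3/4,0), (-3/4,0)} :
        Finset (ℝ × ℝ)) : Set (ℝ × ℝ)) by simp]
    rw [Set.ncard_coe_finset]
    norm_num [Finset.card_insert_of_notMem, Prod.ext_iff]
end
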